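/- For every real ι > 0 such that ι/β is not an integer, w is differentiable at ι with derivative w'(ι) = exp(−αι) · ∑_{i=0}^{⌊ι/β⌋} (γ(ι − iβ))^i / i! · exp(−γ(ι − iβ)). -/

import Mathlib

open Real Finset

/-- Normalized residual of the `i`-th Taylor approximation of the exponential:
`R_i(x) = (exp x − ∑_{j=0}^{i} x^j/j!) / exp x`. -/
noncomputable def Rres (i : ℕ) (x : ℝ) : ℝ :=
  (Real.exp x - ∑ j ∈ Finset.range (i + 1), x ^ j / (Nat.factorial j : ℝ)) / Real.exp x

/-- Expected cumulative freshness `w(ι) = ∑_{i=0}^{⌊ι/β⌋} (ν^i/(Δ+ν)^{i+1})·R_i((α+γ)(ι − iβ))`. -/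
noncomputable def wfun (α β γ ν Δ : ℝ) (ι : ℝ) : ℝ :=
  ∑ i ∈ Finset.range (⌊ι / β⌋₊ + 1),
    (ν ^ i / (Δ + ν) ^ (i + 1)) * Rres i ((α + γ) * (ι - (i : ℝ) * β))

/-!
Since `x ↦ ⌊x / β⌋₊` is locally constant where `x / β` is not an integer, near such an `ι` the
function `w` is a fixed finite sum, which can be differentiated termwise using
`R_i'(x) = x^i / i! · exp(-x)`. The summands then match because `α + γ = Δ + ν` cancels the
factor `(α + γ)^(i+1)` against the denominator, and `ν^i = γ^i · exp(-iαβ)` turns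
`exp(-iαβ) · exp(-(α+γ)(ι - iβ))` into `exp(-αι) · exp(-γ(ι - iβ))`.
-/

open Filter Topology Nat

theorem Int.eventually_floor_eq {α : Type*} [Ring α] [LinearOrder α] [IsStrictOrderedRing α]
    [FloorRing α] [TopologicalSpace α] [OrderTopology α] {x : α} (hx : ∀ k : ℤ, x ≠ k) :
    ∀ᶠ y in 𝓝 x, ⌊y⌋ = ⌊x⌋ :=
  eventually_of_mem
    (Ioo_mem_nhds ((Int.floor_le x).lt_of_ne (hx _).symm) (Int.lt_floor_add_one x))
    fun _ hy ↦ Int.floor_eq_on_Ico _ _ ⟨hy.1.le, hy.2⟩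

theorem hasDerivAt_sum_range_pow_div_factorial {𝕜 : Type*} [NontriviallyNormedField 𝕜]
    [CharZero 𝕜] (n : ℕ) (x : 𝕜) :
    HasDerivAt (fun y ↦ ∑ j ∈ range (n + 1), y ^ j / (j ! : 𝕜))
      (∑ j ∈ range n, x ^ j / (j ! : 𝕜)) x := by
  induction n with
  | zero => simpa using hasDerivAt_const x (1 : 𝕜)
  | succ n ih =>
    have hterm : HasDerivAt (fun y ↦ y ^ (n + 1) / ((n + 1)! : 𝕜)) (x ^ n / (n ! : 𝕜)) x := by
      refine ((hasDerivAt_pow (n + 1) x).div_const ((n + 1)! : 𝕜)).congr_deriv ?_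
      rw [Nat.factorial_succ, Nat.cast_mul, Nat.add_sub_cancel]
      field_simp
    simp only [sum_range_succ _ (n + 1)]
    exact (ih.fun_add hterm).congr_deriv (sum_range_succ _ _).symm

theorem Rres_eq_one_sub (i : ℕ) (y : ℝ) :
    Rres i y = 1 - (∑ j ∈ range (i + 1), y ^ j / (j ! : ℝ)) * exp (-y) := by
  rw [Rres, exp_neg]
  field_simp

theorem hasDerivAt_Rres (i : ℕ) (x : ℝ) :
    HasDerivAt (Rres i) (x ^ i / (i ! : ℝ) * exp (-x)) x := by
  have hexp : HasDerivAt (fun y ↦ exp (-y)) (-exp (-x)) x := by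
    simpa using (hasDerivAt_neg x).exp
  rw [show Rres i = _ from funext (Rres_eq_one_sub i)]
  refine (((hasDerivAt_sum_range_pow_div_factorial i x).fun_mul hexp).const_sub 1).congr_deriv ?_
  rw [sum_range_succ]
  ring

theorem eventually_natFloor_div_eq {β ι : ℝ} (h : ∀ k : ℤ, ι / β ≠ k) :
    ∀ᶠ x in 𝓝 ι, ⌊x / β⌋₊ = ⌊ι / β⌋₊ :=
  ((continuous_id.div_const β).tendsto ι).eventually (Int.eventually_floor_eq h) |>.mono
    fun x hx ↦ by rw [← Int.floor_toNat, ← Int.floor_toNat]; exact congrArg Int.toNat hx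

theorem freshness_summand_eq {α β γ ν Δ : ℝ} (hΔν : Δ + ν ≠ 0) (hrates : α + γ = Δ + ν)
    (hnu : ν = γ * exp (-(α * β))) (i : ℕ) (ι : ℝ) :
    ν ^ i / (Δ + ν) ^ (i + 1) *
        (((α + γ) * (ι - i * β)) ^ i / (i ! : ℝ) * exp (-((α + γ) * (ι - i * β))) * (α + γ)) =
      exp (-(α * ι)) * ((γ * (ι - i * β)) ^ i / (i ! : ℝ) * exp (-(γ * (ι - i * β)))) := by
  have hexp : exp (-(α * β)) ^ i * exp (-((α + γ) * (ι - i * β))) =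
      exp (-(α * ι)) * exp (-(γ * (ι - i * β))) := by
    rw [← exp_nat_mul, ← exp_add, ← exp_add]
    ring_nf
  have hαγ : α + γ ≠ 0 := hrates ▸ hΔν
  rw [← hrates, hnu, mul_pow, mul_pow, mul_pow]
  calc _ = γ ^ i * (ι - i * β) ^ i / (i ! : ℝ) *
          (exp (-(α * β)) ^ i * exp (-((α + γ) * (ι - i * β)))) *
          ((α + γ) ^ (i + 1) / (α + γ) ^ (i + 1)) := by ring
    _ = _ := by rw [hexp, div_self (pow_ne_zero _ hαγ)]; ring

theorem stmt_7_general (α β γ ν Δ : ℝ) (hν : 0 < ν)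
    (hΔ : 0 < Δ) (hrates : α + γ = Δ + ν) (hnu : ν = γ * Real.exp (-(α * β)))
    (ι : ℝ) (hnotint : ∀ k : ℤ, ι / β ≠ (k : ℝ)) :
    HasDerivAt (wfun α β γ ν Δ)
      (Real.exp (-(α * ι)) *
        ∑ i ∈ Finset.range (⌊ι / β⌋₊ + 1),
          (γ * (ι - (i : ℝ) * β)) ^ i / (Nat.factorial i : ℝ) *
            Real.exp (-(γ * (ι - (i : ℝ) * β)))) ι := by
  set n := ⌊ι / β⌋₊
  have hw : wfun α β γ ν Δ =ᶠ[𝓝 ι] fun x ↦ ∑ i ∈ range (n + 1),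
      ν ^ i / (Δ + ν) ^ (i + 1) * Rres i ((α + γ) * (x - i * β)) :=
    (eventually_natFloor_div_eq hnotint).mono fun x hx ↦ by simp only [wfun, hx, n]
  refine HasDerivAt.congr_of_eventuallyEq ?_ hw
  rw [mul_sum]
  refine HasDerivAt.fun_sum fun i _ ↦ ?_
  rw [← freshness_summand_eq (by positivity) hrates hnu]
  have hlin : HasDerivAt (fun x ↦ (α + γ) * (x - i * β)) (α + γ) ι := by
    simpa using ((hasDerivAt_id ι).sub_const ((i : ℝ) * β)).const_mul (α + γ)
  exact ((hasDerivAt_Rres i _).comp ι hlin).const_mul _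

/-- For every real `ι > 0` such that `ι/β` is not an integer, `w` is differentiable at `ι` with
derivative `w'(ι) = exp(−αι) · ∑_{i=0}^{⌊ι/β⌋} (γ(ι − iβ))^i / i! · exp(−γ(ι − iβ))`. -/
theorem stmt_7 (α β γ ν Δ : ℝ) (hα : 0 < α) (hβ : 0 < β) (hγ : 0 < γ) (hν : 0 < ν)
    (hΔ : 0 < Δ) (hrates : α + γ = Δ + ν) (hnu : ν = γ * Real.exp (-(α * β)))
    (ι : ℝ) (hι : 0 < ι) (hnotint : ∀ k : ℤ, ι / β ≠ (k : ℝ)) :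
    HasDerivAt (wfun α β γ ν Δ)
      (Real.exp (-(α * ι)) *
        ∑ i ∈ Finset.range (⌊ι / β⌋₊ + 1),
          (γ * (ι - (i : ℝ) * β)) ^ i / (Nat.factorial i : ℝ) *
            Real.exp (-(γ * (ι - (i : ℝ) * β)))) ι :=
  stmt_7_general α β γ ν Δ hν hΔ hrates hnu ι hnotint
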